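/- Let ζ₃ = e^{2πi/3} and R = ℤ[ζ₃] ⊆ ℂ. Let D ⊆ GL(3, R) be the subgroup D = {diag(ζ₃^a, ζ₃^b, ζ₃^c) : a, b, c ∈ ℤ/3ℤ}. Then the normalizer of D in GL(3, R) consists exactly of the matrices of the form P·diag(u₁, u₂, u₃), where P is a 3×3 permutation matrix and u₁, u₂, u₃ are units of R; in particular this normalizer is a finite group of order 1296. -/

import Mathlib

open Matrix

/-- The primitive third root of unity `ζ₃ = e^{2πi/3}`. -/
noncomputable def zeta3 : ℂ := Complex.exp (2 * Real.pi * Complex.I / 3)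

/-- The ring of Eisenstein integers `R = ℤ[ζ₃]`, the subring of `ℂ` generated by `ζ₃`. -/
noncomputable def EisR : Subring ℂ := Subring.closure {zeta3}

/-- `ζ₃` as an element of `R = ℤ[ζ₃]`. -/
noncomputable def zR : EisR := ⟨zeta3, Subring.subset_closure rfl⟩

/-- The subgroup `D = {diag(ζ₃^a, ζ₃^b, ζ₃^c)} ⊆ GL(3,R)`, described as the set of its
underlying matrices. -/
noncomputable def Dset : Set (Matrix (Fin 3) (Fin 3) EisR) :=
  {A | ∃ a b c : ZMod 3, A = Matrix.diagonal ![zR ^ a.val, zR ^ b.val, zR ^ c.val]}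

/-- `M` normalizes `D`. -/
noncomputable def NormalizesD (M : (Matrix (Fin 3) (Fin 3) EisR)ˣ) : Prop :=
  (fun A => (M : Matrix (Fin 3) (Fin 3) EisR) * A *
    ((M⁻¹ : (Matrix (Fin 3) (Fin 3) EisR)ˣ) : Matrix (Fin 3) (Fin 3) EisR)) '' Dset = Dset








lemma zeta3_prim : IsPrimitiveRoot zeta3 3 := by
  have := Complex.isPrimitiveRoot_exp 3 (by norm_num)
  have h3 : ((3:ℕ):ℂ) = 3 := by norm_num
  rw [h3] at this
  exact this

lemma zeta3_pow3 : zeta3 ^ 3 = 1 := zeta3_prim.pow_eq_one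

lemma zeta3_ne_one : zeta3 ≠ 1 := zeta3_prim.ne_one (by norm_num)

lemma zeta3_sum : zeta3 ^ 2 + zeta3 + 1 = 0 := by
  have h : (zeta3 - 1) * (zeta3 ^ 2 + zeta3 + 1) = 0 := by
    linear_combination zeta3_pow3
  rcases mul_eq_zero.1 h with h1 | h2
  · exact absurd (by linear_combination h1) zeta3_ne_one
  · exact h2

lemma zeta3_sq : zeta3 ^ 2 = -1 - zeta3 := by linear_combination zeta3_sum

lemma zeta3_im_ne : zeta3.im ≠ 0 := by
  intro h
  -- zeta3 real, zeta3^3 = 1 over ℝ implies zeta3 = 1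
  have hre : (zeta3.re : ℂ) = zeta3 := by
    rw [Complex.ext_iff]; simp [h]
  have h3 : (zeta3.re) ^ 3 = 1 := by
    have : ((zeta3.re : ℂ)) ^ 3 = 1 := by rw [hre]; exact zeta3_pow3
    exact_mod_cast this
  have : zeta3.re = 1 := by nlinarith [sq_nonneg (zeta3.re - 1), sq_nonneg (zeta3.re + 1), sq_nonneg zeta3.re]
  exact zeta3_ne_one (by rw [← hre, this]; norm_num)

lemma zeta3_re : zeta3.re = -1/2 := by
  have h := zeta3_sum
  have him : 2 * zeta3.re * zeta3.im + zeta3.im = 0 := by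
    have := congrArg Complex.im h
    simp [Complex.add_im, pow_two, Complex.mul_im] at this
    linarith
  have : zeta3.im * (2 * zeta3.re + 1) = 0 := by ring_nf; linarith [him]
  rcases mul_eq_zero.1 this with h1 | h2
  · exact absurd h1 zeta3_im_ne
  · linarith

lemma zeta3_normSq : Complex.normSq zeta3 = 1 := by
  have h := zeta3_sum
  have hre : zeta3.re^2 - zeta3.im^2 + zeta3.re + 1 = 0 := by
    have := congrArg Complex.re h
    simp [Complex.add_re, pow_two, Complex.mul_re] at this
    nlinarith [this]
  have h2 := zeta3_re
  simp only [Complex.normSq_apply]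
  nlinarith [hre, h2]


/-- The candidate subring {a + b ζ}. -/
noncomputable def EisS : Subring ℂ where
  carrier := {x | ∃ a b : ℤ, x = a + b * zeta3}
  zero_mem' := ⟨0, 0, by simp⟩
  one_mem' := ⟨1, 0, by simp⟩
  add_mem' := by
    rintro x y ⟨a, b, rfl⟩ ⟨c, d, rfl⟩
    exact ⟨a + c, b + d, by push_cast; ring⟩
  neg_mem' := by
    rintro x ⟨a, b, rfl⟩
    exact ⟨-a, -b, by push_cast; ring⟩
  mul_mem' := by
    rintro x y ⟨a, b, rfl⟩ ⟨c, d, rfl⟩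
    refine ⟨a * c - b * d, a * d + b * c - b * d, ?_⟩
    push_cast
    linear_combination ((b:ℂ) * d) * zeta3_sq

lemma EisR_eq : EisR = EisS := by
  apply le_antisymm
  · exact Subring.closure_le.2 (by rintro x rfl; exact ⟨0, 1, by simp⟩)
  · rintro x ⟨a, b, rfl⟩
    exact add_mem (intCast_mem EisR a) (mul_mem (intCast_mem EisR b) (Subring.subset_closure rfl))

lemma mem_EisR_iff {x : ℂ} : x ∈ EisR ↔ ∃ a b : ℤ, x = a + b * zeta3 := by
  rw [EisR_eq]; rfl

lemma rep_unique {a b a' b' : ℤ} (h : (a:ℂ) + b * zeta3 = a' + b' * zeta3) :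
    a = a' ∧ b = b' := by
  have him := congrArg Complex.im h
  simp [Complex.add_im, Complex.mul_im] at him
  have hb : (b:ℝ) = b' := by
    rcases him with h1 | h2
    · exact_mod_cast h1
    · exact absurd h2 zeta3_im_ne
  have hb' : b = b' := by exact_mod_cast hb
  subst hb'
  have : (a:ℂ) = a' := by linear_combination h
  exact ⟨by exact_mod_cast this, rfl⟩


lemma normSq_rep (a b : ℤ) :
    Complex.normSq ((a:ℂ) + b * zeta3) = ((a^2 - a*b + b^2 : ℤ) : ℝ) := by
  have h1 : Complex.normSq ((a:ℂ) + b * zeta3)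
      = (a:ℝ)^2 + 2*a*b*zeta3.re + b^2 * Complex.normSq zeta3 := by
    simp [Complex.normSq_apply, Complex.add_re, Complex.add_im, Complex.mul_re,
      Complex.mul_im]
    ring
  rw [h1, zeta3_re, zeta3_normSq]
  push_cast
  ring

lemma int_norm_one {a b : ℤ} (h : a^2 - a*b + b^2 = 1) :
    (a = 1 ∧ b = 0) ∨ (a = -1 ∧ b = 0) ∨ (a = 0 ∧ b = 1) ∨ (a = 0 ∧ b = -1) ∨
    (a = 1 ∧ b = 1) ∨ (a = -1 ∧ b = -1) := by
  have hb : b^2 ≤ 1 := by nlinarith [sq_nonneg (2*a - b)]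
  have ha : a^2 ≤ 1 := by nlinarith [sq_nonneg (2*b - a)]
  have hb' : -1 ≤ b ∧ b ≤ 1 := abs_le.1 (abs_le_one_iff_mul_self_le_one.2 (by nlinarith))
  have ha' : -1 ≤ a ∧ a ≤ 1 := abs_le.1 (abs_le_one_iff_mul_self_le_one.2 (by nlinarith))
  obtain ⟨hb1, hb2⟩ := hb'; obtain ⟨ha1, ha2⟩ := ha'
  interval_cases a <;> interval_cases b <;> omega

lemma zR_val : (zR : ℂ) = zeta3 := rfl

lemma zR_pow3 : zR ^ 3 = 1 := by
  apply Subtype.ext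
  push_cast [zR_val]
  exact zeta3_pow3

/-- the unit `-ζ₃` of order 6 -/
noncomputable def wU : EisRˣ :=
  ⟨-zR, -(zR^2), by apply Subtype.ext; push_cast [zR_val]; linear_combination zeta3_pow3,
    by apply Subtype.ext; push_cast [zR_val]; linear_combination zeta3_pow3⟩

def pairF : Fin 6 → ℤ × ℤ := ![(1,0),(0,-1),(-1,-1),(-1,0),(0,1),(1,1)]

noncomputable def unitF : Fin 6 → EisRˣ := fun k => wU ^ (k : ℕ)

lemma unitF_val (k : Fin 6) :
    ((unitF k : EisR) : ℂ) = ((pairF k).1 : ℂ) + (pairF k).2 * zeta3 := by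
  have base : ∀ n : ℕ, (((wU ^ n : EisRˣ) : EisR) : ℂ) = (-zeta3)^n := by
    intro n
    push_cast [wU, zR_val]
    ring
  obtain ⟨n, hn⟩ := k
  interval_cases n
  · show (((wU ^ (0:ℕ) : EisRˣ) : EisR) : ℂ) = ((1:ℤ):ℂ) + ((0:ℤ):ℂ) * zeta3
    rw [base]; push_cast; ring
  · show (((wU ^ (1:ℕ) : EisRˣ) : EisR) : ℂ) = ((0:ℤ):ℂ) + ((-1:ℤ):ℂ) * zeta3
    rw [base]; push_cast; ring
  · show (((wU ^ (2:ℕ) : EisRˣ) : EisR) : ℂ) = ((-1:ℤ):ℂ) + ((-1:ℤ):ℂ) * zeta3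
    rw [base]; push_cast; linear_combination zeta3_sq
  · show (((wU ^ (3:ℕ) : EisRˣ) : EisR) : ℂ) = ((-1:ℤ):ℂ) + ((0:ℤ):ℂ) * zeta3
    rw [base]; push_cast; linear_combination -zeta3_pow3
  · show (((wU ^ (4:ℕ) : EisRˣ) : EisR) : ℂ) = ((0:ℤ):ℂ) + ((1:ℤ):ℂ) * zeta3
    rw [base]; push_cast; linear_combination zeta3 * zeta3_pow3
  · show (((wU ^ (5:ℕ) : EisRˣ) : EisR) : ℂ) = ((1:ℤ):ℂ) + ((1:ℤ):ℂ) * zeta3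
    rw [base]; push_cast; linear_combination (-(zeta3^2)) * zeta3_pow3 - zeta3_sq

lemma unitF_inj : Function.Injective unitF := by
  intro k k' h
  have hv := congrArg (fun u : EisRˣ => ((u : EisR) : ℂ)) h
  simp only [unitF_val] at hv
  have := rep_unique hv
  have hp : pairF k = pairF k' := Prod.ext this.1 this.2
  have : Function.Injective pairF := by decide
  exact this hp

lemma normSq_unit (u : EisRˣ) : ∃ a b : ℤ, ((u : EisR) : ℂ) = a + b * zeta3 ∧ a^2 - a*b + b^2 = 1 := by
  obtain ⟨a, b, hab⟩ := mem_EisR_iff.1 (u : EisR).2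
  obtain ⟨c, d, hcd⟩ := mem_EisR_iff.1 ((u⁻¹ : EisRˣ) : EisR).2
  refine ⟨a, b, hab, ?_⟩
  have hprod : ((u : EisR) : ℂ) * ((u⁻¹ : EisRˣ) : EisR) = 1 := by
    have : ((u * u⁻¹ : EisRˣ) : EisR) = 1 := by rw [mul_inv_cancel]; rfl
    calc ((u : EisR) : ℂ) * ((u⁻¹ : EisRˣ) : EisR)
        = (((u * u⁻¹ : EisRˣ) : EisR) : ℂ) := by push_cast; ring
      _ = 1 := by rw [this]; rfl
  have hns : Complex.normSq ((u : EisR) : ℂ) * Complex.normSq ((u⁻¹ : EisRˣ) : EisR) = 1 := by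
    rw [← Complex.normSq_mul, hprod, Complex.normSq_one]
  rw [hab, hcd, normSq_rep, normSq_rep] at hns
  have hint : (a^2 - a*b + b^2) * (c^2 - c*d + d^2) = 1 := by exact_mod_cast hns
  have h1 : 0 ≤ a^2 - a*b + b^2 := by nlinarith [sq_nonneg (2*a-b), sq_nonneg b]
  rcases Int.isUnit_iff.1 (IsUnit.of_mul_eq_one _ hint) with h | h
  · exact h
  · omega

lemma unitF_surj : Function.Surjective unitF := by
  intro u
  obtain ⟨a, b, hab, hsol⟩ := normSq_unit u
  have key : ∀ k : Fin 6, (a, b) = pairF k → unitF k = u := by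
    intro k hk
    apply Units.ext
    apply Subtype.ext
    rw [unitF_val, ← hk, hab]
  rcases int_norm_one hsol with ⟨h1,h2⟩|⟨h1,h2⟩|⟨h1,h2⟩|⟨h1,h2⟩|⟨h1,h2⟩|⟨h1,h2⟩ <;>
    subst h1 <;> subst h2
  · exact ⟨0, key 0 rfl⟩
  · exact ⟨3, key 3 rfl⟩
  · exact ⟨4, key 4 rfl⟩
  · exact ⟨1, key 1 rfl⟩
  · exact ⟨5, key 5 rfl⟩
  · exact ⟨2, key 2 rfl⟩

noncomputable def eisUnitsEquiv : Fin 6 ≃ EisRˣ :=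
  Equiv.ofBijective unitF ⟨unitF_inj, unitF_surj⟩

instance : Finite EisRˣ := Finite.of_equiv _ eisUnitsEquiv

lemma card_EisR_units : Nat.card EisRˣ = 6 := by
  rw [← Nat.card_eq_of_equiv_fin eisUnitsEquiv.symm]

abbrev Mat := Matrix (Fin 3) (Fin 3) EisR

lemma zR_ne_one : zR ≠ 1 := fun h => zeta3_ne_one (congrArg Subtype.val h)

/-- entries of a monomial matrix -/
lemma mon_apply (σ : Equiv.Perm (Fin 3)) (d : Fin 3 → EisR) (i j : Fin 3) :
    (σ.permMatrix EisR * Matrix.diagonal d) i j = if σ i = j then d j else 0 := by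
  rw [PEquiv.toMatrix_toPEquiv_mul]
  by_cases h : σ i = j
  · simp [Matrix.submatrix_apply, h]
  · simp [Matrix.submatrix_apply, Matrix.diagonal_apply_ne _ h, if_neg h]

/-- the vector `![zR^a, zR^b, zR^c]` evaluated -/
lemma vec_eval (a b c : ZMod 3) (k : Fin 3) :
    (![zR ^ a.val, zR ^ b.val, zR ^ c.val] : Fin 3 → EisR) k = zR ^ ((![a, b, c] : Fin 3 → ZMod 3) k).val := by
  fin_cases k <;> rfl

/-- permuted exponent vectors are again exponent vectors -/
lemma vec_perm (τ : Equiv.Perm (Fin 3)) (a b c : ZMod 3) :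
    ∃ a' b' c' : ZMod 3,
      (fun i => (![zR ^ a.val, zR ^ b.val, zR ^ c.val] : Fin 3 → EisR) (τ i))
        = ![zR ^ a'.val, zR ^ b'.val, zR ^ c'.val] := by
  refine ⟨(![a,b,c] : Fin 3 → ZMod 3) (τ 0), (![a,b,c] : Fin 3 → ZMod 3) (τ 1),
    (![a,b,c] : Fin 3 → ZMod 3) (τ 2), ?_⟩
  funext i
  fin_cases i <;> simp [vec_eval]

/-- a monomial matrix conjugates diagonals by permuting entries -/
lemma conj_diag (M : Matˣ) (σ : Equiv.Perm (Fin 3)) (u : Fin 3 → EisRˣ)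
    (hM : (M : Mat) = σ.permMatrix EisR * Matrix.diagonal (fun i => (u i : EisR)))
    (v : Fin 3 → EisR) :
    (M : Mat) * Matrix.diagonal v * ((M⁻¹ : Matˣ) : Mat) = Matrix.diagonal (v ∘ σ) := by
  have hcomm : (M : Mat) * Matrix.diagonal v = Matrix.diagonal (v ∘ σ) * (M : Mat) := by
    ext i j
    rw [Matrix.mul_diagonal, Matrix.diagonal_mul, hM, mon_apply]
    by_cases h : σ i = j
    · simp [h, mul_comm]
    · simp [if_neg h]
  calc (M : Mat) * Matrix.diagonal v * ((M⁻¹ : Matˣ) : Mat)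
      = Matrix.diagonal (v ∘ σ) * ((M : Mat) * ((M⁻¹ : Matˣ) : Mat)) := by
        rw [← mul_assoc, hcomm]
    _ = Matrix.diagonal (v ∘ σ) := by rw [M.mul_inv, mul_one]

/-- ⇐ direction: monomial matrices normalize D -/
lemma mon_normalizes (M : Matˣ) (σ : Equiv.Perm (Fin 3)) (u : Fin 3 → EisRˣ)
    (hM : (M : Mat) = σ.permMatrix EisR * Matrix.diagonal (fun i => (u i : EisR))) :
    NormalizesD M := by
  unfold NormalizesD
  apply Set.eq_of_subset_of_subset
  · rintro A ⟨B, ⟨a, b, c, rfl⟩, rfl⟩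
    obtain ⟨a', b', c', h⟩ := vec_perm σ a b c
    exact ⟨a', b', c', by dsimp only; rw [conj_diag M σ u hM]; exact congrArg Matrix.diagonal h⟩
  · rintro A ⟨a, b, c, rfl⟩
    obtain ⟨a', b', c', h⟩ := vec_perm σ.symm a b c
    refine ⟨Matrix.diagonal ![zR ^ a'.val, zR ^ b'.val, zR ^ c'.val], ⟨a', b', c', rfl⟩, ?_⟩
    dsimp only
    rw [conj_diag M σ u hM, ← h]
    apply congrArg Matrix.diagonal
    funext i
    simp

/-- the generator `d_j = diag(1,…,ζ,…,1)` lies in Dset -/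
lemma dgen_mem (j : Fin 3) :
    Matrix.diagonal (fun k => if k = j then zR else 1) ∈ Dset := by
  have hval1 : (1 : ZMod 3).val = 1 := rfl
  have hval0 : (0 : ZMod 3).val = 0 := rfl
  fin_cases j
  · refine ⟨1, 0, 0, ?_⟩
    apply congrArg Matrix.diagonal
    funext k; fin_cases k <;> simp [hval1, hval0, Fin.ext_iff]
  · refine ⟨0, 1, 0, ?_⟩
    apply congrArg Matrix.diagonal
    funext k; fin_cases k <;> simp [hval1, hval0, Fin.ext_iff]
  · refine ⟨0, 0, 1, ?_⟩
    apply congrArg Matrix.diagonal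
    funext k; fin_cases k <;> simp [hval1, hval0, Fin.ext_iff]

lemma normalizes_mon (M : Matˣ) (hN : NormalizesD M) :
    ∃ (σ : Equiv.Perm (Fin 3)) (u : Fin 3 → EisRˣ),
      (M : Mat) = σ.permMatrix EisR * Matrix.diagonal (fun i => (u i : EisR)) := by
  classical
  set dv : Fin 3 → Fin 3 → EisR := fun j k => if k = j then zR else 1 with hdv
  -- conjugates of the generators are diagonal
  have H : ∀ j : Fin 3, ∃ e : Fin 3 → EisR,
      (M : Mat) * Matrix.diagonal (dv j) = Matrix.diagonal e * (M : Mat) := by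
    intro j
    have hmem : (M : Mat) * Matrix.diagonal (dv j) * ((M⁻¹ : Matˣ) : Mat) ∈ Dset := by
      rw [← hN]
      exact ⟨Matrix.diagonal (dv j), dgen_mem j, rfl⟩
    obtain ⟨a, b, c, h⟩ := hmem
    refine ⟨![zR ^ a.val, zR ^ b.val, zR ^ c.val], ?_⟩
    calc (M : Mat) * Matrix.diagonal (dv j)
        = ((M : Mat) * Matrix.diagonal (dv j) * ((M⁻¹ : Matˣ) : Mat)) * (M : Mat) := by
          rw [mul_assoc, M.inv_mul, mul_one]
      _ = _ := by rw [h]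
  choose e he using H
  -- the cancellation consequence
  have key : ∀ j i k, (M : Mat) i k ≠ 0 → dv j k = e j i := by
    intro j i k hne
    have h2 : ((M : Mat) * Matrix.diagonal (dv j)) i k
        = (Matrix.diagonal (e j) * (M : Mat)) i k := by rw [he j]
    rw [Matrix.mul_diagonal, Matrix.diagonal_mul] at h2
    apply mul_left_cancel₀ hne
    rw [h2, mul_comm]
  -- each row has a nonzero entry
  have rownz : ∀ i, ∃ k, (M : Mat) i k ≠ 0 := by
    intro i
    by_contra hc
    push_neg at hc
    have h1 : ((M : Mat) * ((M⁻¹ : Matˣ) : Mat)) i i = 1 := by rw [M.mul_inv]; simp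
    rw [Matrix.mul_apply] at h1
    simp only [hc, zero_mul, Finset.sum_const_zero] at h1
    exact one_ne_zero h1.symm
  have colnz : ∀ k, ∃ i, (M : Mat) i k ≠ 0 := by
    intro k
    by_contra hc
    push_neg at hc
    have h1 : (((M⁻¹ : Matˣ) : Mat) * (M : Mat)) k k = 1 := by rw [M.inv_mul]; simp
    rw [Matrix.mul_apply] at h1
    simp only [hc, mul_zero, Finset.sum_const_zero] at h1
    exact one_ne_zero h1.symm
  -- uniqueness in each row
  have rowuniq : ∀ i k k', (M : Mat) i k ≠ 0 → (M : Mat) i k' ≠ 0 → k = k' := by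
    intro i k k' h1 h2
    by_contra hkk
    have e1 : dv k k = e k i := key k i k h1
    have e2 : dv k k' = e k i := key k i k' h2
    rw [← e2] at e1
    simp only [hdv, if_pos rfl, if_neg (Ne.symm hkk)] at e1
    exact zR_ne_one e1
  choose f hf using rownz
  have funiq : ∀ i k, (M : Mat) i k ≠ 0 → k = f i := fun i k h => rowuniq i k (f i) h (hf i)
  have fsurj : Function.Surjective f := by
    intro k
    obtain ⟨i, hi⟩ := colnz k
    exact ⟨i, (funiq i k hi).symm⟩
  have fbij : Function.Bijective f := ⟨Finite.injective_iff_surjective.2 fsurj, fsurj⟩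
  set σ : Equiv.Perm (Fin 3) := Equiv.ofBijective f fbij with hσ
  have hσf : ∀ i, σ i = f i := fun i => rfl
  -- the nonzero entries are units
  have hunit : ∀ k, (M : Mat) (σ.symm k) k * ((M⁻¹ : Matˣ) : Mat) k (σ.symm k) = 1 := by
    intro k
    set i := σ.symm k with hi
    have hfi : f i = k := by rw [← hσf]; exact σ.apply_symm_apply k
    have h1 : ((M : Mat) * ((M⁻¹ : Matˣ) : Mat)) i i = 1 := by rw [M.mul_inv]; simp
    rw [Matrix.mul_apply] at h1
    rw [← h1]
    symm
    apply Finset.sum_eq_single k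
    · intro t _ htk
      have : (M : Mat) i t = 0 := by
        by_contra hc
        exact htk ((funiq i t hc).trans hfi)
      rw [this, zero_mul]
    · intro hk
      exact absurd (Finset.mem_univ k) hk
  refine ⟨σ, fun k => ⟨(M : Mat) (σ.symm k) k, ((M⁻¹ : Matˣ) : Mat) k (σ.symm k),
    hunit k, by rw [mul_comm]; exact hunit k⟩, ?_⟩
  apply Matrix.ext
  intro i j
  rw [mon_apply]
  by_cases h : σ i = j
  · rw [if_pos h]
    exact congrArg (fun t => (M : Mat) t j) (by rw [← h, Equiv.symm_apply_apply] : i = σ.symm j)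
  · rw [if_neg h]
    by_contra hc
    exact h ((hσf i).trans (funiq i j hc).symm)


/-- permutation matrices as units -/
noncomputable def permUnit (σ : Equiv.Perm (Fin 3)) : Matˣ where
  val := σ.permMatrix EisR
  inv := σ⁻¹.permMatrix EisR
  val_inv := by
    rw [Equiv.Perm.permMatrix, Equiv.Perm.permMatrix, ← PEquiv.toMatrix_trans,
      ← Equiv.toPEquiv_trans]
    simp [← Equiv.Perm.mul_def, Equiv.toPEquiv_refl]
  inv_val := by
    rw [Equiv.Perm.permMatrix, Equiv.Perm.permMatrix, ← PEquiv.toMatrix_trans,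
      ← Equiv.toPEquiv_trans]
    simp [← Equiv.Perm.mul_def, Equiv.toPEquiv_refl]

/-- diagonal unit matrices -/
noncomputable def diagUnit (u : Fin 3 → EisRˣ) : Matˣ where
  val := Matrix.diagonal (fun i => (u i : EisR))
  inv := Matrix.diagonal (fun i => (((u i)⁻¹ : EisRˣ) : EisR))
  val_inv := by
    rw [Matrix.diagonal_mul_diagonal]
    convert Matrix.diagonal_one
    simp
  inv_val := by
    rw [Matrix.diagonal_mul_diagonal]
    convert Matrix.diagonal_one
    simp

noncomputable def monMap (p : Equiv.Perm (Fin 3) × (Fin 3 → EisRˣ)) :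
    {M : Matˣ // NormalizesD M} :=
  ⟨permUnit p.1 * diagUnit p.2, mon_normalizes _ p.1 p.2 rfl⟩

lemma monMap_bij : Function.Bijective monMap := by
  constructor
  · rintro ⟨σ, u⟩ ⟨τ, v⟩ h
    have hval : (σ.permMatrix EisR) * Matrix.diagonal (fun i => (u i : EisR))
        = (τ.permMatrix EisR) * Matrix.diagonal (fun i => (v i : EisR)) := by
      have := congrArg (fun x : {M : Matˣ // NormalizesD M} => ((x : Matˣ) : Mat)) h
      exact this
    have hστ : σ = τ := by
      apply Equiv.ext
      intro i
      have h1 := congrFun (congrFun hval i) (σ i)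
      rw [mon_apply, mon_apply, if_pos rfl] at h1
      by_contra hne
      rw [if_neg (fun hh => hne hh.symm)] at h1
      exact (u (σ i)).ne_zero h1
    subst hστ
    have huv : u = v := by
      funext k
      apply Units.ext
      have h1 := congrFun (congrFun hval (σ.symm k)) k
      rw [mon_apply, mon_apply, if_pos (σ.apply_symm_apply k), if_pos (σ.apply_symm_apply k)] at h1
      exact h1
    rw [huv]
  · rintro ⟨M, hM⟩
    obtain ⟨σ, u, hval⟩ := normalizes_mon M hM
    refine ⟨⟨σ, u⟩, ?_⟩
    apply Subtype.ext
    apply Units.ext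
    exact hval.symm

lemma card_normalizer : Nat.card {M : Matˣ // NormalizesD M} = 1296 := by
  rw [← Nat.card_congr (Equiv.ofBijective monMap monMap_bij)]
  rw [Nat.card_prod, Nat.card_fun]
  rw [card_EisR_units]
  rw [Nat.card_eq_fintype_card (α := Equiv.Perm (Fin 3)), Fintype.card_perm]
  norm_num [Nat.factorial]

/-- (Proposition 4.4.) The normalizer of
`D = {diag(ζ₃^a, ζ₃^b, ζ₃^c)}` in `GL(3, ℤ[ζ₃])` consists exactly of the products of a
permutation matrix with a diagonal matrix of units, and it has order `1296`. -/
theorem rigid_torus_quotient_stmt12 :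
    (∀ M : (Matrix (Fin 3) (Fin 3) EisR)ˣ,
      NormalizesD M ↔
        ∃ (σ : Equiv.Perm (Fin 3)) (u : Fin 3 → EisRˣ),
          (M : Matrix (Fin 3) (Fin 3) EisR) =
            (σ.permMatrix EisR) * Matrix.diagonal (fun i => (u i : EisR))) ∧
    Nat.card {M : (Matrix (Fin 3) (Fin 3) EisR)ˣ // NormalizesD M} = 1296 := by
  refine ⟨fun M => ⟨fun h => normalizes_mon M h, fun ⟨σ, u, h⟩ => mon_normalizes M σ u h⟩, ?_⟩
  exact card_normalizer
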